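/- arXiv:2009.10824 — 3 statements merged into one kernel-verified Lean document; each statement's English description precedes it below -/
import Mathlib

section
/- For y₁,…,y_q ∈ Y and h₁,…,h_{k−q} ∈ H, writing y = y₁∧⋯∧y_q ∈ ∧^qH, one has (δ−1)(y∧h₁∧⋯∧h_{k−q}) ≡ Σ_{i=1}^{k−q} y∧h₁∧⋯∧(δ−1)hᵢ∧⋯∧h_{k−q} modulo F_{q+2}∧ᵏH. In particular, (δ−1)(F_q∧ᵏH) ⊆ F_{q+1}∧ᵏH for all 0 ≤ q ≤ k. -/
/-!
Write `δ = 1 + d`. Since `d² = 0` and `H` is torsion-free, `d` maps `H` into `Y` and kills `Y`. Expanding `δ(v₁ ∧ ⋯ ∧ v_k) = ⋀ (d vᵢ + vᵢ)` multilinearly gives a sum over the sets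
`s` of positions where `d` is applied: the term for `s = ∅` is cancelled by the `- 1`, a term with
`s` meeting the first `q` positions vanishes because `d` kills `Y`, and any other term has `Y`-entries
at the first `q` positions and at `s`, so lies in `F_{q + |s|}`. The singletons give the displayed sum,
and all remaining terms have `|s| ≥ 2`.
-/

/-- The filtration `F_q ⋀^k H = (⋀^q Y) ∧ (⋀^{k-q} H)`: the span of simple wedges
`y₁ ∧ ⋯ ∧ y_q ∧ h₁ ∧ ⋯ ∧ h_{k-q}` with the first `q` entries in `Y` (and `0` for `q > k`),
realized inside the exterior algebra. -/
noncomputable def Ffil {H : Type} [AddCommGroup H] [Module ℤ H]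
    (Y : Submodule ℤ H) (k q : ℕ) : Submodule ℤ (ExteriorAlgebra ℤ H) :=
  if q ≤ k then
    Submodule.span ℤ {z | ∃ v : Fin k → H,
      (∀ i : Fin k, (i : ℕ) < q → v i ∈ Y) ∧ z = ExteriorAlgebra.ιMulti ℤ k v}
  else ⊥

/-- The map `δ - 1` induced functorially on the exterior algebra; restricted to the `k`-th
exterior power `⋀[ℤ]^k H` it is the map induced by `δ` on `⋀^k H` minus the identity. -/
noncomputable def Dmap {H : Type} [AddCommGroup H] [Module ℤ H]
    (δ : H →ₗ[ℤ] H) : ExteriorAlgebra ℤ H →ₗ[ℤ] ExteriorAlgebra ℤ H :=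
  (ExteriorAlgebra.map δ).toLinearMap - LinearMap.id

open Finset

theorem MultilinearMap.map_add_univ_eq_add_sum_update_add {R ι : Type*} {M₁ : ι → Type*}
    {N : Type*} [CommSemiring R] [∀ i, AddCommMonoid (M₁ i)] [AddCommMonoid N]
    [∀ i, Module R (M₁ i)] [Module R N] [DecidableEq ι] [Fintype ι]
    (f : MultilinearMap R M₁ N) (w v : ∀ i, M₁ i) :
    f (w + v) = f v + ∑ i, f (Function.update v i (w i)) +
      ∑ s : Finset ι with 2 ≤ #s, f (s.piecewise w v) := by
  have hsmall : ({s : Finset ι | ¬ 2 ≤ #s} : Finset (Finset ι)) =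
      insert ∅ (univ.map ⟨singleton, singleton_injective⟩) := by
    ext s
    simp only [mem_filter, mem_univ, true_and, mem_insert, mem_map, Function.Embedding.coeFn_mk]
    constructor
    · intro hs
      obtain h0 | h1 : #s = 0 ∨ #s = 1 := by omega
      · exact .inl (card_eq_zero.1 h0)
      · obtain ⟨a, rfl⟩ := card_eq_one.1 h1
        exact .inr ⟨a, rfl⟩
    · rintro (rfl | ⟨a, rfl⟩) <;> simp
  rw [f.map_add_univ, ← sum_filter_not_add_sum_filter _ (fun s => 2 ≤ #s), hsmall,
    sum_insert (by simp), sum_map]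
  simp [piecewise_singleton]

theorem LinearMap.apply_eq_zero_of_smul_mem_range {R M : Type*} [Ring R] [IsDomain R]
    [AddCommGroup M] [Module R M] [Module.IsTorsionFree R M] {d : M →ₗ[R] M}
    (hd : d ∘ₗ d = 0) {n : R} (hn : n ≠ 0) {x : M} (hx : n • x ∈ range d) : d x = 0 := by
  obtain ⟨z, hz⟩ := hx
  have hnx : n • d x = 0 := by rw [← map_smul, ← hz, ← LinearMap.comp_apply, hd, zero_apply]
  exact (smul_eq_zero.1 hnx).resolve_left hn

section Filtration

variable {H : Type} [AddCommGroup H] [Module ℤ H] (Y : Submodule ℤ H) (k : ℕ)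

theorem Ffil_antitone : Antitone (Ffil Y k) := by
  intro p q h
  by_cases hq : q ≤ k
  · simp only [Ffil, if_pos hq, if_pos (h.trans hq)]
    refine Submodule.span_le.2 ?_
    rintro z ⟨v, hv, rfl⟩
    exact Submodule.subset_span ⟨v, fun i hi => hv i (hi.trans_le h), rfl⟩
  · simp only [Ffil, if_neg hq, bot_le]

variable {Y k}

theorem ιMulti_mem_Ffil {r : ℕ} {v : Fin k → H} (T : Finset (Fin k)) (hr : r ≤ #T)
    (hT : ∀ i ∈ T, v i ∈ Y) : ExteriorAlgebra.ιMulti ℤ k v ∈ Ffil Y k r := by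
  have hrk : r ≤ k := hr.trans (card_le_univ T |>.trans_eq (Fintype.card_fin k))
  rw [Ffil, if_pos hrk]
  obtain ⟨T', hT'T, hT'⟩ := exists_subset_card_eq hr
  have e : {i : Fin k // (i : ℕ) < r} ≃ {i : Fin k // i ∈ T'} := by
    refine Fintype.equivOfCardEq ?_
    rw [Fintype.card_subtype, Fin.card_filter_val_lt, Fintype.card_coe, hT', min_eq_right hrk]
  -- permuting the entries so that those in `T'` come first only changes the sign
  rw [(ExteriorAlgebra.ιMulti ℤ k).map_congr_perm v e.extendSubtype, Units.smul_def]
  exact Submodule.smul_mem _ _ <| Submodule.subset_span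
    ⟨v ∘ e.extendSubtype, fun i hi => hT _ (hT'T (e.extendSubtype_mem i hi)), rfl⟩

theorem ιMulti_piecewise_mem_Ffil {q : ℕ} {w v : Fin k → H} (hw : ∀ i, w i ∈ Y)
    (hv : ∀ i : Fin k, (i : ℕ) < q → v i ∈ Y) (hw₀ : ∀ i : Fin k, (i : ℕ) < q → w i = 0)
    {s : Finset (Fin k)} (hs : s.Nonempty) :
    ExteriorAlgebra.ιMulti ℤ k (s.piecewise w v) ∈ Ffil Y k (q + #s) := by
  by_cases hlow : ∃ i ∈ s, (i : ℕ) < q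
  · obtain ⟨i, his, hiq⟩ := hlow
    have hzero := (ExteriorAlgebra.ιMulti ℤ k).map_coord_zero (m := s.piecewise w v) i
      (by rw [piecewise_eq_of_mem _ _ _ his, hw₀ i hiq])
    rw [hzero]
    exact zero_mem _
  push Not at hlow
  have hqk : q ≤ k := by
    obtain ⟨i, hi⟩ := hs
    exact (hlow i hi).trans i.2.le
  have hdisj : Disjoint s ({i : Fin k | (i : ℕ) < q} : Finset (Fin k)) :=
    disjoint_left.2 fun i hi hi' => (hlow i hi).not_gt (mem_filter.1 hi').2
  refine ιMulti_mem_Ffil (s ∪ ({i : Fin k | (i : ℕ) < q} : Finset (Fin k))) ?_ ?_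
  · rw [card_union_of_disjoint hdisj, Fin.card_filter_val_lt, min_eq_right hqk, add_comm]
  · intro i hi
    rcases mem_union.1 hi with his | hiq
    · rw [piecewise_eq_of_mem _ _ _ his]
      exact hw i
    · rw [piecewise_eq_of_notMem _ _ _ (disjoint_right.1 hdisj hiq)]
      exact hv i (mem_filter.1 hiq).2

end Filtration

theorem Dmap_ιMulti {H : Type} [AddCommGroup H] [Module ℤ H] (δ : H →ₗ[ℤ] H) {k : ℕ}
    (v : Fin k → H) :
    Dmap δ (ExteriorAlgebra.ιMulti ℤ k v) =
      ∑ i, ExteriorAlgebra.ιMulti ℤ k (Function.update v i (δ (v i) - v i)) +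
        ∑ s : Finset (Fin k) with 2 ≤ #s,
          ExteriorAlgebra.ιMulti ℤ k (s.piecewise (fun i => δ (v i) - v i) v) := by
  have hδv : δ ∘ v = (fun i => δ (v i) - v i) + v := by
    ext i
    simp
  change ExteriorAlgebra.map δ (ExteriorAlgebra.ιMulti ℤ k v) - ExteriorAlgebra.ιMulti ℤ k v = _
  rw [ExteriorAlgebra.map_apply_ιMulti, hδv,
    ← AlternatingMap.coe_multilinearMap,
    MultilinearMap.map_add_univ_eq_add_sum_update_add]
  simp only [AlternatingMap.coe_multilinearMap]
  abel

section Unipotent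

variable {H : Type} [AddCommGroup H] [Module ℤ H] {δ : H →ₗ[ℤ] H} {Y : Submodule ℤ H}
  (hrange : ∀ x, δ x - x ∈ Y) (hker : ∀ y ∈ Y, δ y = y) {k q : ℕ}
include hrange hker

theorem ιMulti_piecewise_sub_mem_Ffil {v : Fin k → H} (hv : ∀ i : Fin k, (i : ℕ) < q → v i ∈ Y)
    {s : Finset (Fin k)} (hs : s.Nonempty) :
    ExteriorAlgebra.ιMulti ℤ k (s.piecewise (fun i => δ (v i) - v i) v) ∈ Ffil Y k (q + #s) :=
  ιMulti_piecewise_mem_Ffil (fun i => hrange (v i)) hv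
    (fun i hi => by rw [hker _ (hv i hi), sub_self]) hs

theorem sum_ιMulti_piecewise_sub_mem_Ffil {v : Fin k → H}
    (hv : ∀ i : Fin k, (i : ℕ) < q → v i ∈ Y) :
    ∑ s : Finset (Fin k) with 2 ≤ #s,
      ExteriorAlgebra.ιMulti ℤ k (s.piecewise (fun i => δ (v i) - v i) v) ∈ Ffil Y k (q + 2) := by
  refine Submodule.sum_mem _ fun s hs => ?_
  have hs2 : 2 ≤ #s := (mem_filter.1 hs).2
  exact Ffil_antitone Y k (by omega)
    (ιMulti_piecewise_sub_mem_Ffil hrange hker hv (card_pos.1 (by omega)))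

theorem Dmap_ιMulti_sub_sum_mem_Ffil {v : Fin k → H} (hv : ∀ i : Fin k, (i : ℕ) < q → v i ∈ Y) :
    Dmap δ (ExteriorAlgebra.ιMulti ℤ k v)
      - ∑ i ∈ univ.filter (fun i : Fin k => q ≤ (i : ℕ)),
          ExteriorAlgebra.ιMulti ℤ k (Function.update v i (δ (v i) - v i))
      ∈ Ffil Y k (q + 2) := by
  have hlow : ∑ i ∈ univ.filter (fun i : Fin k => ¬ q ≤ (i : ℕ)),
      ExteriorAlgebra.ιMulti ℤ k (Function.update v i (δ (v i) - v i)) = 0 := by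
    refine sum_eq_zero fun i hi => ?_
    rw [hker _ (hv i (by simpa using hi)), sub_self]
    exact (ExteriorAlgebra.ιMulti ℤ k).map_update_zero v i
  rw [Dmap_ιMulti, ← sum_filter_add_sum_filter_not univ (fun i : Fin k => q ≤ (i : ℕ)), hlow,
    add_zero, add_sub_cancel_left]
  exact sum_ιMulti_piecewise_sub_mem_Ffil hrange hker hv

theorem map_Dmap_Ffil_le : Submodule.map (Dmap δ) (Ffil Y k q) ≤ Ffil Y k (q + 1) := by
  rw [Submodule.map_le_iff_le_comap]
  by_cases hqk : q ≤ k
  · rw [Ffil, if_pos hqk, Submodule.span_le]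
    rintro _ ⟨v, hv, rfl⟩
    rw [SetLike.mem_coe, Submodule.mem_comap, Dmap_ιMulti]
    refine add_mem (Submodule.sum_mem _ fun i _ => ?_)
      (Ffil_antitone Y k (by omega) (sum_ιMulti_piecewise_sub_mem_Ffil hrange hker hv))
    simpa [piecewise_singleton] using
      ιMulti_piecewise_sub_mem_Ffil hrange hker hv (singleton_nonempty i)
  · rw [Ffil, if_neg hqk]
    exact bot_le

end Unipotent

theorem ceresa_stmt2_general {H : Type} [AddCommGroup H] [Module ℤ H]
    [Module.Free ℤ H]
    (δ : H →ₗ[ℤ] H) (hδ2 : (δ - LinearMap.id) ∘ₗ (δ - LinearMap.id) = 0)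
    (Y : Submodule ℤ H)
    (hY : ∀ x : H, x ∈ Y ↔ ∃ n : ℤ, n ≠ 0 ∧ n • x ∈ LinearMap.range (δ - LinearMap.id))
    (k q : ℕ) :
    (∀ v : Fin k → H, (∀ i : Fin k, (i : ℕ) < q → v i ∈ Y) →
      Dmap δ (ExteriorAlgebra.ιMulti ℤ k v)
        - ∑ i ∈ Finset.univ.filter (fun i : Fin k => q ≤ (i : ℕ)),
            ExteriorAlgebra.ιMulti ℤ k (Function.update v i (δ (v i) - v i))
        ∈ Ffil Y k (q + 2)) ∧
    Submodule.map (Dmap δ) (Ffil Y k q) ≤ Ffil Y k (q + 1) := by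
  have hrange : ∀ x, δ x - x ∈ Y := fun x => (hY _).2 ⟨1, one_ne_zero, x, by simp⟩
  have hker : ∀ y ∈ Y, δ y = y := fun y hy => by
    obtain ⟨n, hn, hny⟩ := (hY y).1 hy
    -- `n • y` in `hY` is the `zsmul` action, not the one of the given `Module ℤ H` instance
    rw [← Int.cast_smul_eq_zsmul ℤ, Int.cast_id] at hny
    simpa [sub_eq_zero] using LinearMap.apply_eq_zero_of_smul_mem_range hδ2 hn hny
  exact ⟨fun v hv => Dmap_ιMulti_sub_sum_mem_Ffil hrange hker hv, map_Dmap_Ffil_le hrange hker⟩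

/-- For `y₁,…,y_q ∈ Y` and `h₁,…,h_{k−q} ∈ H`, one has
`(δ−1)(y∧h₁∧⋯∧h_{k−q}) ≡ Σᵢ y∧h₁∧⋯∧(δ−1)hᵢ∧⋯∧h_{k−q}` modulo `F_{q+2}⋀ᵏH`;
in particular `(δ−1)(F_q⋀ᵏH) ⊆ F_{q+1}⋀ᵏH`. -/
theorem ceresa_stmt2 {H : Type} [AddCommGroup H] [Module ℤ H]
    [Module.Free ℤ H] [Module.Finite ℤ H]
    (δ : H →ₗ[ℤ] H) (hδ2 : (δ - LinearMap.id) ∘ₗ (δ - LinearMap.id) = 0)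
    (Y : Submodule ℤ H)
    (hY : ∀ x : H, x ∈ Y ↔ ∃ n : ℤ, n ≠ 0 ∧ n • x ∈ LinearMap.range (δ - LinearMap.id))
    (k q : ℕ) :
    (∀ v : Fin k → H, (∀ i : Fin k, (i : ℕ) < q → v i ∈ Y) →
      Dmap δ (ExteriorAlgebra.ιMulti ℤ k v)
        - ∑ i ∈ Finset.univ.filter (fun i : Fin k => q ≤ (i : ℕ)),
            ExteriorAlgebra.ιMulti ℤ k (Function.update v i (δ (v i) - v i))
        ∈ Ffil Y k (q + 2)) ∧
    Submodule.map (Dmap δ) (Ffil Y k q) ≤ Ffil Y k (q + 1) :=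
  ceresa_stmt2_general δ hδ2 Y hY k q
end

section
/- In the symplectic setting, both quotient groups Ā(δ) = (F₂L + H̃) / (((δ−1)(L) + H̃) ∩ (F₂L + H̃)) and B̄(δ) = (F₂L + H̃) / ((δ−1)(F₁L) + F₃L + H̃) are finite. -/
/-- The image `H̃` of `H` in `L = ⋀³H` under `h ↦ ω ∧ h`, where
`ω = Σᵢ αᵢ ∧ βᵢ` for a symplectic basis `e = (α₁,…,α_g,β₁,…,β_g)`. -/
noncomputable def Htil {H : Type} [AddCommGroup H] [Module ℤ H] {g : ℕ}
    (e : (Fin g ⊕ Fin g) → H) : Submodule ℤ (ExteriorAlgebra ℤ H) :=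
  Submodule.span ℤ {z | ∃ h : H,
    z = (∑ i : Fin g, ExteriorAlgebra.ι ℤ (e (Sum.inl i)) * ExteriorAlgebra.ι ℤ (e (Sum.inr i)))
        * ExteriorAlgebra.ι ℤ h}

/-! Both quotients are finitely generated abelian groups, so it suffices that they are torsion,
i.e. that `F₂L` lies in the saturation of `(δ - 1)F₁L`. For `y₁, y₂ ∈ Y` choose `xᵢ` with
`(δ - 1)xᵢ = nᵢyᵢ`. Since `δ` fixes `Y` and `(δ - 1)h ∈ Y`, applying `δ - 1` to four wedges of
`x₁, x₂, y₁, y₂, h, (δ - 1)h` lying in `F₁L` and cancelling the mixed terms leaves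
`2n₁n₂ • y₁ ∧ y₂ ∧ h`. -/

open ExteriorAlgebra

section Saturation

variable {A : Type} [AddCommGroup A]

def saturation (N : Submodule ℤ A) : Submodule ℤ A where
  carrier := {x | ∃ n : ℤ, n ≠ 0 ∧ n • x ∈ N}
  add_mem' := by
    rintro x y ⟨m, hm, hmx⟩ ⟨n, hn, hny⟩
    refine ⟨n * m, mul_ne_zero hn hm, ?_⟩
    rw [smul_add, mul_smul, mul_comm, mul_smul]
    exact N.add_mem (N.smul_mem n hmx) (N.smul_mem m hny)
  zero_mem' := ⟨1, one_ne_zero, by simp⟩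
  smul_mem' := by
    rintro c x ⟨n, hn, hnx⟩
    exact ⟨n, hn, by rw [smul_comm]; exact N.smul_mem c hnx⟩

theorem le_saturation (N : Submodule ℤ A) : N ≤ saturation N :=
  fun x hx ↦ ⟨1, one_ne_zero, by simpa using hx⟩

theorem saturation_mono {N₁ N₂ : Submodule ℤ A} (h : N₁ ≤ N₂) :
    saturation N₁ ≤ saturation N₂ := fun _ ⟨n, hn, hnx⟩ ↦ ⟨n, hn, h hnx⟩

theorem finite_quotient_of_le_saturation {M N : Submodule ℤ A} (hM : M.FG)
    (h : M ≤ saturation N) : Finite (M ⧸ N.comap M.subtype) := by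
  have : Module.Finite ℤ M := Module.Finite.iff_fg.mpr hM
  apply Module.finite_of_fg_torsion
  rintro ⟨m⟩
  obtain ⟨n, hn, hnm⟩ := h m.2
  exact ⟨⟨n, mem_nonZeroDivisors_of_ne_zero hn⟩, (Submodule.Quotient.mk_eq_zero _).2 hnm⟩

end Saturation

section TripleProducts

variable {R M : Type*} [CommRing R] [AddCommGroup M] [Module R M]

theorem ExteriorAlgebra.ιMulti_fin_three (v : Fin 3 → M) :
    ιMulti R 3 v = ι R (v 0) * ι R (v 1) * ι R (v 2) := by
  simp [ιMulti_apply, mul_assoc, Matrix.vecTail, Fin.succ_zero_eq_one]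

theorem ExteriorAlgebra.ι_mul_ι_mul_ι_mem_exteriorPower (a b c : M) :
    ι R a * ι R b * ι R c ∈ ⋀[R]^3 M := by
  have h := ιMulti_range R 3 ⟨![a, b, c], rfl⟩
  rw [ιMulti_fin_three] at h
  exact h

theorem ExteriorAlgebra.ι_mul_ι_comm (a b : M) : ι R a * ι R b = -(ι R b * ι R a) :=
  eq_neg_of_add_eq_zero_left (ι_add_mul_swap a b)

theorem ExteriorAlgebra.ι_mul_ι_mul_ι_swap_left (a b c : M) :
    ι R a * ι R b * ι R c = -(ι R b * ι R a * ι R c) := by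
  rw [ι_mul_ι_comm a b, neg_mul]

theorem ExteriorAlgebra.ι_mul_ι_mul_ι_swap_right (a b c : M) :
    ι R a * ι R b * ι R c = -(ι R a * ι R c * ι R b) := by
  rw [mul_assoc, ι_mul_ι_comm b c, mul_neg, mul_assoc]

end TripleProducts

section Filtration

variable {H : Type} [AddCommGroup H] (Y : Submodule ℤ H)

theorem Ffil_le_exteriorPower (k q : ℕ) : Ffil Y k q ≤ ⋀[ℤ]^k H := by
  unfold Ffil
  split_ifs
  · exact Submodule.span_le.2 fun _ ⟨v, _, hz⟩ ↦ hz ▸ ιMulti_range ℤ k ⟨v, rfl⟩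
  · exact bot_le

theorem ι_mul_ι_mul_ι_mem_Ffil_three_one_of_left {a : H} (ha : a ∈ Y) (b c : H) :
    ι ℤ a * ι ℤ b * ι ℤ c ∈ Ffil Y 3 1 := by
  rw [Ffil, if_pos (by norm_num)]
  refine Submodule.subset_span ⟨![a, b, c], fun i hi ↦ ?_, (ιMulti_fin_three ![a, b, c]).symm⟩
  obtain rfl : i = 0 := Fin.ext (Nat.lt_one_iff.1 hi)
  exact ha

theorem ι_mul_ι_mul_ι_mem_Ffil_three_one_of_mid {b : H} (hb : b ∈ Y) (a c : H) :
    ι ℤ a * ι ℤ b * ι ℤ c ∈ Ffil Y 3 1 := by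
  rw [ι_mul_ι_mul_ι_swap_left]
  exact neg_mem (ι_mul_ι_mul_ι_mem_Ffil_three_one_of_left Y hb a c)

theorem ι_mul_ι_mul_ι_mem_Ffil_three_one_of_right {c : H} (hc : c ∈ Y) (a b : H) :
    ι ℤ a * ι ℤ b * ι ℤ c ∈ Ffil Y 3 1 := by
  rw [ι_mul_ι_mul_ι_swap_right]
  exact neg_mem (ι_mul_ι_mul_ι_mem_Ffil_three_one_of_mid Y hc a b)

theorem Ffil_three_two_le {N : Submodule ℤ (ExteriorAlgebra ℤ H)}
    (h : ∀ a ∈ Y, ∀ b ∈ Y, ∀ c, ι ℤ a * ι ℤ b * ι ℤ c ∈ N) : Ffil Y 3 2 ≤ N := by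
  rw [Ffil, if_pos (by norm_num), Submodule.span_le]
  rintro _ ⟨v, hv, rfl⟩
  rw [ιMulti_fin_three]
  exact h _ (hv 0 (by norm_num)) _ (hv 1 (by norm_num)) _

theorem Htil_le_exteriorPower {g : ℕ} (e : Fin g ⊕ Fin g → H) : Htil e ≤ ⋀[ℤ]^3 H := by
  rw [Htil, Submodule.span_le]
  rintro _ ⟨h, rfl⟩
  rw [Finset.sum_mul]
  exact Submodule.sum_mem _ fun i _ ↦ ι_mul_ι_mul_ι_mem_exteriorPower _ _ _

end Filtration

section Unipotent

variable {H : Type} [AddCommGroup H] {δ : H →ₗ[ℤ] H}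

theorem Dmap_ι_mul_ι_mul_ι (a b c : H) :
    Dmap δ (ι ℤ a * ι ℤ b * ι ℤ c) = ι ℤ (δ a) * ι ℤ (δ b) * ι ℤ (δ c) - ι ℤ a * ι ℤ b * ι ℤ c := by
  simp [Dmap]

theorem two_mul_mul_smul_eq_Dmap_combination {a b c d x₁ x₂ : H} {n₁ n₂ : ℤ}
    (ha : δ a = a) (hb : δ b = b) (hc : δ c = c + d) (hd : δ d = d)
    (hx₁ : δ x₁ = x₁ + n₁ • a) (hx₂ : δ x₂ = x₂ + n₂ • b) :
    (2 * n₁ * n₂) • (ι ℤ a * ι ℤ b * ι ℤ c) =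
      n₁ • Dmap δ (ι ℤ a * ι ℤ x₂ * ι ℤ c) + n₂ • Dmap δ (ι ℤ x₁ * ι ℤ b * ι ℤ c)
        - Dmap δ (ι ℤ x₁ * ι ℤ x₂ * ι ℤ d) - n₂ • Dmap δ (ι ℤ x₁ * ι ℤ b * ι ℤ d) := by
  simp only [Dmap_ι_mul_ι_mul_ι, ha, hb, hc, hd, hx₁, hx₂, map_add, map_zsmul]
  simp only [mul_add, add_mul, mul_smul_comm, smul_mul_assoc, smul_sub, smul_add]
  module

variable [Module.IsTorsionFree ℤ H] (hδ2 : (δ - LinearMap.id) ∘ₗ (δ - LinearMap.id) = 0)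
include hδ2

theorem LinearMap.apply_eq_self_of_mem_saturation_range {y : H}
    (hy : y ∈ saturation (LinearMap.range (δ - LinearMap.id))) : δ y = y := by
  obtain ⟨n, hn, x, hx⟩ := hy
  have h : n • (δ y - y) = 0 := by
    simpa [hx, smul_sub] using congr($hδ2 x)
  exact sub_eq_zero.1 ((smul_eq_zero_iff_right hn).1 h)

theorem ι_mul_ι_mul_ι_mem_saturation_map_Dmap {Y : Submodule ℤ H}
    (hY : Y = saturation (LinearMap.range (δ - LinearMap.id))) {a b : H} (ha : a ∈ Y) (hb : b ∈ Y)
    (c : H) : ι ℤ a * ι ℤ b * ι ℤ c ∈ saturation ((Ffil Y 3 1).map (Dmap δ)) := by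
  have hfix {y : H} (hy : y ∈ Y) : δ y = y :=
    LinearMap.apply_eq_self_of_mem_saturation_range hδ2 (hY ▸ hy)
  have hd : δ c - c ∈ Y := hY ▸ le_saturation _ ⟨c, rfl⟩
  obtain ⟨n₁, hn₁, x₁, hx₁⟩ := hY ▸ ha
  obtain ⟨n₂, hn₂, x₂, hx₂⟩ := hY ▸ hb
  refine ⟨2 * n₁ * n₂, by positivity, ?_⟩
  rw [two_mul_mul_smul_eq_Dmap_combination (hfix ha) (hfix hb) (add_sub_cancel c (δ c)).symm
    (hfix hd) (eq_add_of_sub_eq' hx₁) (eq_add_of_sub_eq' hx₂)]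
  have hF₁ {z : ExteriorAlgebra ℤ H} (hz : z ∈ Ffil Y 3 1) : Dmap δ z ∈ (Ffil Y 3 1).map (Dmap δ) :=
    Submodule.mem_map_of_mem hz
  refine sub_mem (sub_mem (add_mem (zsmul_mem (hF₁ ?_) _) (zsmul_mem (hF₁ ?_) _)) (hF₁ ?_))
    (zsmul_mem (hF₁ ?_) _)
  · exact ι_mul_ι_mul_ι_mem_Ffil_three_one_of_left Y ha _ _
  · exact ι_mul_ι_mul_ι_mem_Ffil_three_one_of_mid Y hb _ _
  · exact ι_mul_ι_mul_ι_mem_Ffil_three_one_of_right Y hd _ _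
  · exact ι_mul_ι_mul_ι_mem_Ffil_three_one_of_mid Y hb _ _

theorem Ffil_three_two_le_saturation_map_Dmap {Y : Submodule ℤ H}
    (hY : Y = saturation (LinearMap.range (δ - LinearMap.id))) :
    Ffil Y 3 2 ≤ saturation ((Ffil Y 3 1).map (Dmap δ)) :=
  Ffil_three_two_le Y fun _ ha _ hb c ↦ ι_mul_ι_mul_ι_mem_saturation_map_Dmap hδ2 hY ha hb c

end Unipotent

theorem ceresa_stmt13_general (g : ℕ)
    {H : Type} [AddCommGroup H] [Module ℤ H]
    (e : Module.Basis (Fin g ⊕ Fin g) ℤ H)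
    (δ : H →ₗ[ℤ] H) (hδ2 : (δ - LinearMap.id) ∘ₗ (δ - LinearMap.id) = 0)
    (Y : Submodule ℤ H)
    (hY : ∀ x : H, x ∈ Y ↔ ∃ n : ℤ, n ≠ 0 ∧ n • x ∈ LinearMap.range (δ - LinearMap.id)) :
    Finite (↥(Ffil Y 3 2 ⊔ Htil ⇑e) ⧸ Submodule.comap (Ffil Y 3 2 ⊔ Htil ⇑e).subtype
      ((Submodule.map (Dmap δ) (⋀[ℤ]^3 H) ⊔ Htil ⇑e) ⊓ (Ffil Y 3 2 ⊔ Htil ⇑e))) ∧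
    Finite (↥(Ffil Y 3 2 ⊔ Htil ⇑e) ⧸ Submodule.comap (Ffil Y 3 2 ⊔ Htil ⇑e).subtype
      (Submodule.map (Dmap δ) (Ffil Y 3 1) ⊔ Ffil Y 3 3 ⊔ Htil ⇑e)) := by
  -- every `ℤ`-module structure is the canonical one, for which the lemmas above are stated
  obtain rfl := Subsingleton.elim ‹Module ℤ H› (AddCommGroup.toIntModule H)
  have := e.isTorsionFree
  have hY' : Y = saturation (LinearMap.range (δ - LinearMap.id)) := Submodule.ext hY
  have hfg : (Ffil Y 3 2 ⊔ Htil e).FG := by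
    refine Submodule.FG.of_le ?_ (sup_le (Ffil_le_exteriorPower Y 3 2) (Htil_le_exteriorPower e))
    rw [exteriorPower, LinearMap.range_eq_map]
    exact ((Module.Finite.of_basis e).fg_top.map _).pow 3
  have hsat : Ffil Y 3 2 ⊔ Htil e ≤ saturation ((Ffil Y 3 1).map (Dmap δ) ⊔ Htil e) :=
    sup_le ((Ffil_three_two_le_saturation_map_Dmap hδ2 hY').trans (saturation_mono le_sup_left))
      (le_sup_right.trans (le_saturation _))
  constructor
  · rw [Submodule.comap_inf, Submodule.comap_subtype_self, inf_top_eq]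
    refine finite_quotient_of_le_saturation hfg (hsat.trans (saturation_mono ?_))
    exact sup_le_sup_right (Submodule.map_mono (Ffil_le_exteriorPower Y 3 1)) _
  · exact finite_quotient_of_le_saturation hfg
      (hsat.trans (saturation_mono (sup_le_sup_right le_sup_left _)))

/-- In the symplectic setting, both quotient groups
`Ā(δ) = (F₂L + H̃)/(((δ−1)(L) + H̃) ∩ (F₂L + H̃))` and
`B̄(δ) = (F₂L + H̃)/((δ−1)(F₁L) + F₃L + H̃)` are finite, where `L = ⋀³H` and `H̃` is the
image of `h ↦ ω ∧ h`. -/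
theorem ceresa_stmt13 (g : ℕ) (hg : 2 ≤ g)
    {H : Type} [AddCommGroup H] [Module ℤ H]
    (B : H →ₗ[ℤ] H →ₗ[ℤ] ℤ) (halt : ∀ x : H, B x x = 0)
    (e : Module.Basis (Fin g ⊕ Fin g) ℤ H)
    (he1 : ∀ i j, B (e (Sum.inl i)) (e (Sum.inl j)) = 0)
    (he2 : ∀ i j, B (e (Sum.inr i)) (e (Sum.inr j)) = 0)
    (he3 : ∀ i j, B (e (Sum.inl i)) (e (Sum.inr j)) = if i = j then 1 else 0)
    (δ : H →ₗ[ℤ] H) (hδ2 : (δ - LinearMap.id) ∘ₗ (δ - LinearMap.id) = 0)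
    (hδB : ∀ x y : H, B (δ x) (δ y) = B x y)
    (Y : Submodule ℤ H)
    (hY : ∀ x : H, x ∈ Y ↔ ∃ n : ℤ, n ≠ 0 ∧ n • x ∈ LinearMap.range (δ - LinearMap.id)) :
    Finite (↥(Ffil Y 3 2 ⊔ Htil ⇑e) ⧸ Submodule.comap (Ffil Y 3 2 ⊔ Htil ⇑e).subtype
      ((Submodule.map (Dmap δ) (⋀[ℤ]^3 H) ⊔ Htil ⇑e) ⊓ (Ffil Y 3 2 ⊔ Htil ⇑e))) ∧
    Finite (↥(Ffil Y 3 2 ⊔ Htil ⇑e) ⧸ Submodule.comap (Ffil Y 3 2 ⊔ Htil ⇑e).subtype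
      (Submodule.map (Dmap δ) (Ffil Y 3 1) ⊔ Ffil Y 3 3 ⊔ Htil ⇑e)) :=
  ceresa_stmt13_general g e δ hδ2 Y hY
end

section
/- Let H be a finitely generated free ℤ-module with a perfect alternating bilinear form ⟨·,·⟩ : H × H → ℤ, let ℓ₁,…,ℓ_N ∈ H satisfy ⟨ℓᵢ,ℓⱼ⟩ = 0 for all i,j, let c₁,…,c_N be positive integers, and let δ : H → H be the endomorphism δ(h) = h + Σ_{i=1}^N cᵢ ⟨ℓᵢ,h⟩ ℓᵢ. Then the ℚ-span of the image of δ − 1 in H ⊗ ℚ equals the ℚ-span of {ℓ₁,…,ℓ_N}; equivalently, the saturation of (δ−1)(H) in H equals the saturation of the ℤ-span Y of ℓ₁,…,ℓ_N. -/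
/-!
Write `T = δ - 1`, so `T h = Σ cᵢ ⟨ℓᵢ, h⟩ ℓᵢ` and `T(H) ⊆ Y`. Conversely, since `H ⧸ sat(T(H))` is
free, it suffices that every functional `f` vanishing on `T(H)` vanishes on each `ℓᵢ`. Now
`f (T h) = ⟨v, h⟩` with `v = Σ cᵢ f(ℓᵢ) ℓᵢ`, so nondegeneracy forces `v = 0`, and then
`0 = f v = Σ cᵢ f(ℓᵢ)²` with all `cᵢ > 0`.
-/

open Module Submodule

namespace Submodule

variable {R H : Type*} [CommRing R] [IsDomain R] [AddCommGroup H] [Module R H]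
  {M N : Submodule R H} {x : H}

def saturation (M : Submodule R H) : Submodule R H :=
  (torsion R (H ⧸ M)).comap M.mkQ

theorem mem_saturation_iff : x ∈ M.saturation ↔ ∃ r : R, r ≠ 0 ∧ r • x ∈ M := by
  simp only [saturation, mem_comap, mkQ_apply, mem_torsion_iff, ← Quotient.mk_smul,
    Quotient.mk_eq_zero, Subtype.exists, mem_nonZeroDivisors_iff_ne_zero, Submonoid.mk_smul,
    exists_prop]

theorem le_saturation (M : Submodule R H) : M ≤ M.saturation :=
  fun x hx => mem_saturation_iff.2 ⟨1, one_ne_zero, by rwa [one_smul]⟩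

theorem saturation_le_saturation (h : M ≤ N.saturation) : M.saturation ≤ N.saturation := by
  intro x hx
  obtain ⟨r, hr, hrx⟩ := mem_saturation_iff.1 hx
  obtain ⟨s, hs, hsx⟩ := mem_saturation_iff.1 (h hrx)
  exact mem_saturation_iff.2 ⟨s * r, mul_ne_zero hs hr, by rwa [mul_smul]⟩

theorem saturation_mono (h : M ≤ N) : M.saturation ≤ N.saturation :=
  saturation_le_saturation (h.trans N.le_saturation)

instance isTorsionFree_quotient_saturation : IsTorsionFree R (H ⧸ M.saturation) := by
  refine .of_smul_eq_zero fun r y hy => or_iff_not_imp_left.2 fun hr => ?_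
  induction y using Quotient.induction_on with | H x => ?_
  rw [← Quotient.mk_smul, Quotient.mk_eq_zero] at hy
  rw [Quotient.mk_eq_zero]
  exact saturation_le_saturation le_rfl (mem_saturation_iff.2 ⟨r, hr, hy⟩)

variable [IsPrincipalIdealRing R] [Module.Finite R H]

theorem exists_dual_of_notMem_saturation (hx : x ∉ M.saturation) :
    ∃ f : Dual R H, f x ≠ 0 ∧ M ≤ LinearMap.ker f := by
  have : Module.Free R (H ⧸ M.saturation) := free_of_finite_type_torsion_free'
  obtain ⟨f, hfx, hf⟩ := exists_dual_map_eq_bot_of_notMem hx inferInstance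
  exact ⟨f, hfx, M.le_saturation.trans (LinearMap.le_ker_iff_map.2 hf)⟩

theorem le_saturation_of_forall_dual
    (h : ∀ f : Dual R H, M ≤ LinearMap.ker f → N ≤ LinearMap.ker f) : N ≤ M.saturation := by
  intro x hx
  by_contra hxM
  obtain ⟨f, hfx, hMf⟩ := exists_dual_of_notMem_saturation hxM
  exact hfx (h f hMf hx)

end Submodule

section Multitwist

variable {R H ι : Type*} [CommRing R] [AddCommGroup H] [Module R H] [Fintype ι]
  (B : H →ₗ[R] H →ₗ[R] R) (ℓ : ι → H) (c : ι → R)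

def twistSum : H →ₗ[R] H :=
  ∑ i, c i • (B (ℓ i)).smulRight (ℓ i)

theorem twistSum_apply (x : H) : twistSum B ℓ c x = ∑ i, (c i * B (ℓ i) x) • ℓ i := by
  simp [twistSum, mul_smul]

theorem range_twistSum_le_span : LinearMap.range (twistSum B ℓ c) ≤ span R (Set.range ℓ) := by
  rintro _ ⟨x, rfl⟩
  rw [twistSum_apply]
  exact sum_mem fun i _ => smul_mem _ _ (subset_span ⟨i, rfl⟩)

theorem dual_comp_twistSum (f : Dual R H) :
    f ∘ₗ twistSum B ℓ c = B (∑ i, (c i * f (ℓ i)) • ℓ i) := by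
  ext x
  simp only [LinearMap.comp_apply, twistSum_apply, map_sum, map_smul, LinearMap.sum_apply,
    LinearMap.smul_apply, smul_eq_mul]
  exact Finset.sum_congr rfl fun i _ => by ring

variable {B c} [LinearOrder R] [IsStrictOrderedRing R]

theorem apply_eq_zero_of_range_twistSum_le_ker (hB : Function.Injective B) (hc : ∀ i, 0 < c i)
    {f : Dual R H} (hf : LinearMap.range (twistSum B ℓ c) ≤ LinearMap.ker f) (i : ι) :
    f (ℓ i) = 0 := by
  have hv : ∑ i, (c i * f (ℓ i)) • ℓ i = 0 := by
    apply hB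
    rw [← dual_comp_twistSum, map_zero, LinearMap.range_le_ker_iff.1 hf]
  have hsq : ∑ i, c i * (f (ℓ i) * f (ℓ i)) = 0 := by
    simpa only [map_sum, map_smul, smul_eq_mul, map_zero, mul_assoc] using congrArg f hv
  have := (Finset.sum_eq_zero_iff_of_nonneg fun j _ =>
    mul_nonneg (hc j).le (mul_self_nonneg _)).1 hsq i (Finset.mem_univ i)
  simpa [(hc i).ne'] using this

theorem saturation_range_twistSum [IsPrincipalIdealRing R] [Module.Finite R H]
    (hB : Function.Injective B) (hc : ∀ i, 0 < c i) :
    (LinearMap.range (twistSum B ℓ c)).saturation = (span R (Set.range ℓ)).saturation := by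
  refine le_antisymm (saturation_mono (range_twistSum_le_span B ℓ c))
    (saturation_le_saturation (le_saturation_of_forall_dual fun f hf => ?_))
  rw [span_le]
  rintro _ ⟨i, rfl⟩
  exact apply_eq_zero_of_range_twistSum_le_ker ℓ hB hc hf i

end Multitwist

theorem ceresa_stmt19_general {H : Type} [AddCommGroup H] [Module ℤ H]
    [Module.Finite ℤ H]
    (B : H →ₗ[ℤ] H →ₗ[ℤ] ℤ)
    (hperf : Function.Bijective ⇑B)
    (N : ℕ) (ℓ : Fin N → H)
    (c : Fin N → ℕ) (hc : ∀ i, 0 < c i)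
    (δ : H →ₗ[ℤ] H)
    (hδ : ∀ h : H, δ h = h + ∑ i, ((c i : ℤ) * B (ℓ i) h) • ℓ i) :
    ∀ h : H, (∃ n : ℤ, n ≠ 0 ∧ n • h ∈ LinearMap.range (δ - LinearMap.id)) ↔
      (∃ n : ℤ, n ≠ 0 ∧ n • h ∈ Submodule.span ℤ (Set.range ℓ)) := by
  -- `n • h` in the statement is `zsmul`; the canonical `ℤ`-module structure makes it the module action.
  obtain rfl : ‹Module ℤ H› = AddCommGroup.toIntModule H := Subsingleton.elim _ _
  have hδ_sub_one : δ - LinearMap.id = twistSum B ℓ (fun i => (c i : ℤ)) := by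
    ext h
    simp [twistSum_apply, hδ]
  intro h
  rw [hδ_sub_one, ← mem_saturation_iff, ← mem_saturation_iff,
    saturation_range_twistSum ℓ hperf.injective (fun i => by exact_mod_cast hc i)]

/-- Let `H` be a finitely generated free `ℤ`-module with a perfect alternating bilinear form
`⟨·,·⟩`, let `ℓ₁,…,ℓ_N ∈ H` satisfy `⟨ℓᵢ,ℓⱼ⟩ = 0`, let `c₁,…,c_N` be positive integers, and
let `δ(h) = h + Σᵢ cᵢ⟨ℓᵢ,h⟩ℓᵢ`. Then the saturation of `(δ−1)(H)` in `H` equals the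
saturation of the `ℤ`-span of `ℓ₁,…,ℓ_N`. -/
theorem ceresa_stmt19 {H : Type} [AddCommGroup H] [Module ℤ H]
    [Module.Free ℤ H] [Module.Finite ℤ H]
    (B : H →ₗ[ℤ] H →ₗ[ℤ] ℤ) (halt : ∀ x : H, B x x = 0)
    (hperf : Function.Bijective ⇑B)
    (N : ℕ) (ℓ : Fin N → H) (hℓ : ∀ i j, B (ℓ i) (ℓ j) = 0)
    (c : Fin N → ℕ) (hc : ∀ i, 0 < c i)
    (δ : H →ₗ[ℤ] H)
    (hδ : ∀ h : H, δ h = h + ∑ i, ((c i : ℤ) * B (ℓ i) h) • ℓ i) :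
    ∀ h : H, (∃ n : ℤ, n ≠ 0 ∧ n • h ∈ LinearMap.range (δ - LinearMap.id)) ↔
      (∃ n : ℤ, n ≠ 0 ∧ n • h ∈ Submodule.span ℤ (Set.range ℓ)) :=
  ceresa_stmt19_general B hperf N ℓ c hc δ hδ
end
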